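/- Let μ ∈ ℝ and σ > 0. There exists no nonincreasing function f : ℝ → [0,1] that is a precise p-variable for H_US(μ,σ); that is, no nonincreasing f satisfies both (i) Q({x : f(x) ≤ α}) ≤ α for all α ∈ (0,1) and all Q ∈ H_US(μ,σ), and (ii) sup_{Q∈H_US(μ,σ)} Q({x : f(x) ≤ α}) = α for all α ∈ (0,1). -/
import Mathlib


open MeasureTheory Set
open scoped ENNReal

/-- Mean of a distribution on ℝ. -/
noncomputable def distMean (Q : Measure ℝ) : ℝ := ∫ x, x ∂Q

/-- Variance of a distribution on ℝ. -/
noncomputable def distVar (Q : Measure ℝ) : ℝ := ∫ x, (x - distMean Q)^2 ∂Q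

/-- `H(μ,σ)`: Borel probability measures on ℝ with finite second moment,
mean at most `μ`, and variance at most `σ²`. -/
def MemH (μ σ : ℝ) (Q : Measure ℝ) : Prop :=
  IsProbabilityMeasure Q ∧ Integrable (fun x => x^2) Q ∧
    distMean Q ≤ μ ∧ distVar Q ≤ σ^2

/-- A distribution `Q` with mean `m` is symmetric if
`Q((-∞, m−x]) = Q([m+x, ∞))` for all `x`. -/
def IsSymmetricDist (Q : Measure ℝ) : Prop :=
  ∀ x : ℝ, Q (Iic (distMean Q - x)) = Q (Ici (distMean Q + x))

/-- A distribution on ℝ is unimodal: for some `x₀` it is a nonnegative multiple of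
the Dirac mass at `x₀` plus a measure with a Lebesgue density that is nondecreasing
on `(-∞, x₀)` and nonincreasing on `(x₀, ∞)`. -/
def Unimodal (Q : Measure ℝ) : Prop :=
  ∃ (x₀ : ℝ) (c : ℝ≥0∞) (f : ℝ → ℝ≥0∞),
    Q = c • Measure.dirac x₀ + volume.withDensity f ∧
    MonotoneOn f (Iio x₀) ∧ AntitoneOn f (Ioi x₀)

/-- there is no nonincreasing precise p-variable for `H_US(μ,σ)`. -/
theorem stmt_17 (μ σ : ℝ) (hσ : 0 < σ) :
    ¬ ∃ f : ℝ → ℝ, Antitone f ∧ (∀ x, f x ∈ Icc (0:ℝ) 1) ∧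
      (∀ Q : Measure ℝ, MemH μ σ Q → IsSymmetricDist Q → Unimodal Q →
        ∀ α ∈ Ioo (0:ℝ) 1, (Q {x | f x ≤ α}).toReal ≤ α) ∧
      (∀ α ∈ Ioo (0:ℝ) 1,
        IsLUB {r : ℝ | ∃ Q : Measure ℝ, MemH μ σ Q ∧ IsSymmetricDist Q ∧ Unimodal Q ∧
          r = (Q {x | f x ≤ α}).toReal} α) := by
  rintro ⟨f, hf_anti, _hf01, hP, hLUB⟩
  have hmean : distMean (Measure.dirac μ) = μ := by simp [distMean]
  have hQ : MemH μ σ (Measure.dirac μ) := by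
    refine ⟨inferInstance, ?_, ?_, ?_⟩
    · exact (integrable_const (μ^2)).congr (MeasureTheory.ae_eq_dirac (fun x : ℝ => x^2)).symm
    · simp [hmean]
    · simp [distVar, hmean]
      positivity
  have hsym : IsSymmetricDist (Measure.dirac μ) := by
    intro x
    rw [hmean]
    simp only [Measure.dirac_apply, Set.indicator_apply, Set.mem_Iic, Set.mem_Ici]
    have : μ ≤ μ - x ↔ μ + x ≤ μ := by constructor <;> intro <;> linarith
    simp [this]
  have huni : Unimodal (Measure.dirac μ) := by
    refine ⟨μ, 1, 0, ?_, monotoneOn_const, antitoneOn_const⟩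
    simp
  have h34 : (3/4 : ℝ) ∈ Ioo (0:ℝ) 1 := by norm_num
  have hfμ : ¬ f μ ≤ 3/4 := by
    intro h
    have h1 := hP _ hQ hsym huni (3/4) h34
    have h2 : (Measure.dirac μ) {x | f x ≤ (3/4:ℝ)} = 1 :=
      Measure.dirac_apply_of_mem h
    rw [h2] at h1
    norm_num at h1
  -- every attained value is at most 1/2
  have hub : ∀ r ∈ {r : ℝ | ∃ Q : Measure ℝ, MemH μ σ Q ∧ IsSymmetricDist Q ∧ Unimodal Q ∧
      r = (Q {x | f x ≤ (3/4:ℝ)}).toReal}, r ≤ 1/2 := by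
    rintro r ⟨Q, hQm, hQs, _hQu, rfl⟩
    obtain ⟨hprob, _, hmle, _⟩ := hQm
    set m := distMean Q with hm
    have hsub : {x | f x ≤ (3/4:ℝ)} ⊆ Ioi m := by
      intro x hx
      by_contra hxm
      simp only [mem_Ioi, not_lt] at hxm
      exact hfμ (le_trans (hf_anti (le_trans hxm hmle)) hx)
    have hIicIci : Q (Iic m) = Q (Ici m) := by
      have := hQs 0
      simpa using this
    have hhalf : (1/2 : ℝ≥0∞) ≤ Q (Iic m) := by
      have h1 : (1 : ℝ≥0∞) ≤ Q (Iic m) + Q (Ici m) := by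
        have : Q (Iic m ∪ Ici m) ≤ Q (Iic m) + Q (Ici m) := measure_union_le _ _
        have huniv : Iic m ∪ Ici m = Set.univ := Iic_union_Ici
        rw [huniv] at this
        simpa using this
      rw [← hIicIci, ← two_mul] at h1
      have h2 : (1:ℝ≥0∞) ≤ Q (Iic m) * 2 := by rwa [mul_comm] at h1
      have h3 := ENNReal.div_le_of_le_mul h2
      simpa using h3
    have hIoi : Q (Ioi m) ≤ 1/2 := by
      have hc : Q (Iic m)ᶜ = 1 - Q (Iic m) := by
        rw [measure_compl measurableSet_Iic (measure_ne_top Q _)]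
        simp
      have : Q (Ioi m) = 1 - Q (Iic m) := by rw [← compl_Iic, hc]
      rw [this]
      calc 1 - Q (Iic m) ≤ 1 - (1/2 : ℝ≥0∞) := tsub_le_tsub_left hhalf 1
        _ = 1/2 :=
          ENNReal.sub_eq_of_eq_add (by norm_num)
            (by rw [one_div]; exact ENNReal.inv_two_add_inv_two.symm)
    have hQA : Q {x | f x ≤ (3/4:ℝ)} ≤ 1/2 := le_trans (measure_mono hsub) hIoi
    have := ENNReal.toReal_mono (by norm_num) hQA
    simpa using this
  have hlub := hLUB (3/4) h34
  have : (3/4 : ℝ) ≤ 1/2 := hlub.2 hub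
  linarith
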